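/- arXiv:2405.03214 — 4 statements merged into one kernel-verified Lean document; each statement's English description precedes it below -/
import Mathlib

section
/- Let γ > 1 and v₊ > 0 be given. Then there exists a constant C > 0 such that for any v, v̄ satisfying 0 < v̄ < 2v₊ and 0 < v < 3v₊, one has |v − v̄|² ≤ C·Q(v|v̄) and |v − v̄|² ≤ C·p(v|v̄). -/
/-!
The relative quantity `F(v|v̄)` is the Bregman divergence of `F`. If `F'' ≥ m` on an interval
containing `v` and `v̄`, then `F - m x²/2` is convex there and lies above its tangent at `v̄`,
which gives `F(v|v̄) ≥ m/2 · (v - v̄)²`. For `F(x) = x^r` with `r ≤ 0`, on `(0, b)` we have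
`F''(x) = r(r-1) x^(r-2) ≥ r(r-1) b^(r-2)`. Both `Q` (`r = 1-γ`) and `p` (`r = -γ`) are of this
form up to a positive factor, and `b = 3v₊` bounds both `v` and `v̄`.
-/

open Real

noncomputable section

/-- The pressure `p(v) = v^(-γ)`. -/
def pres (γ v : ℝ) : ℝ := v ^ (-γ)

/-- The internal energy `Q(v) = v^(1-γ)/(γ-1)`. -/
def intE (γ v : ℝ) : ℝ := v ^ (1 - γ) / (γ - 1)

/-- The relative internal energy `Q(v|v̄) = Q(v) - Q(v̄) - Q'(v̄)(v - v̄)`, using `Q' = -p`. -/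
def QRel (γ v w : ℝ) : ℝ := intE γ v - intE γ w + pres γ w * (v - w)

/-- The relative pressure `p(v|v̄) = p(v) - p(v̄) - p'(v̄)(v - v̄)`, using `p'(w) = -γ w^(-γ-1)`. -/
def pRel (γ v w : ℝ) : ℝ := pres γ v - pres γ w + γ * w ^ (-γ - 1) * (v - w)

theorem ConvexOn.bregman_nonneg_of_hasDerivAt {S : Set ℝ} {f : ℝ → ℝ} {f' x y : ℝ}
    (hf : ConvexOn ℝ S f) (hx : x ∈ S) (hy : y ∈ S) (hfx : HasDerivAt f f' x) :
    0 ≤ f y - f x - f' * (y - x) := by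
  rcases lt_trichotomy x y with hxy | rfl | hxy
  · have h := hf.le_slope_of_hasDerivAt hx hy hxy hfx
    rw [slope_def_field, le_div_iff₀ (sub_pos.2 hxy)] at h
    linarith
  · simp
  · have h := hf.slope_le_of_hasDerivAt hy hx hxy hfx
    rw [slope_def_field, div_le_iff₀ (sub_pos.2 hxy)] at h
    linarith

theorem half_mul_sq_le_bregman_of_le_deriv2 {D : Set ℝ} (hD : Convex ℝ D) (hDo : IsOpen D)
    {F F' F'' : ℝ → ℝ} {m : ℝ} (hF : ∀ x ∈ D, HasDerivAt F (F' x) x)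
    (hF' : ∀ x ∈ D, HasDerivAt F' (F'' x) x) (hm : ∀ x ∈ D, m ≤ F'' x)
    {v w : ℝ} (hv : v ∈ D) (hw : w ∈ D) :
    m / 2 * (v - w) ^ 2 ≤ F v - F w - F' w * (v - w) := by
  have hg : ∀ x ∈ D, HasDerivAt (fun x ↦ F x - m / 2 * x ^ 2) (F' x - m * x) x := fun x hx ↦
    ((hF x hx).sub ((hasDerivAt_pow 2 x).const_mul (m / 2))).congr_deriv (by ring)
  have hg' : ∀ x ∈ D, HasDerivAt (fun x ↦ F' x - m * x) (F'' x - m) x := fun x hx ↦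
    ((hF' x hx).sub ((hasDerivAt_id x).const_mul m)).congr_deriv (by ring)
  have hconv : ConvexOn ℝ D (fun x ↦ F x - m / 2 * x ^ 2) := by
    refine convexOn_of_hasDerivWithinAt2_nonneg hD
      (f' := fun x ↦ F' x - m * x) (f'' := fun x ↦ F'' x - m)
      (fun x hx ↦ (hg x hx).continuousAt.continuousWithinAt) ?_ ?_ ?_ <;>
      rw [hDo.interior_eq] <;> intro x hx
    · exact (hg x hx).hasDerivWithinAt
    · exact (hg' x hx).hasDerivWithinAt
    · exact sub_nonneg.2 (hm x hx)
  have := hconv.bregman_nonneg_of_hasDerivAt hw hv (hg w hw)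
  nlinarith

theorem rpow_bregman_lower_bound {r b v w : ℝ} (hr : r ≤ 0) (hv : v ∈ Set.Ioo 0 b)
    (hw : w ∈ Set.Ioo 0 b) :
    r * (r - 1) * b ^ (r - 2) / 2 * (v - w) ^ 2 ≤ v ^ r - w ^ r - r * w ^ (r - 1) * (v - w) := by
  refine half_mul_sq_le_bregman_of_le_deriv2 (convex_Ioo 0 b) isOpen_Ioo
    (F' := fun x ↦ r * x ^ (r - 1)) (F'' := fun x ↦ r * (r - 1) * x ^ (r - 2))
    (fun x hx ↦ hasDerivAt_rpow_const (Or.inl hx.1.ne')) (fun x hx ↦ ?_) (fun x hx ↦ ?_) hv hw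
  · simpa [sub_sub, mul_assoc, one_add_one_eq_two] using
      (hasDerivAt_rpow_const (p := r - 1) (Or.inl hx.1.ne')).const_mul r
  · exact mul_le_mul_of_nonneg_left (rpow_le_rpow_of_nonpos hx.1 hx.2.le (by linarith))
      (by nlinarith)

theorem mul_sq_le_QRel {γ b v w : ℝ} (hγ : 1 < γ) (hv : v ∈ Set.Ioo 0 b)
    (hw : w ∈ Set.Ioo 0 b) :
    γ * b ^ (-γ - 1) / 2 * (v - w) ^ 2 ≤ QRel γ v w := by
  have h := rpow_bregman_lower_bound (r := 1 - γ) (by linarith) hv hw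
  rw [show 1 - γ - 2 = -γ - 1 by ring, show 1 - γ - 1 = -γ by ring] at h
  have hγ1 : 0 < γ - 1 := sub_pos.2 hγ
  calc γ * b ^ (-γ - 1) / 2 * (v - w) ^ 2
        = (1 - γ) * -γ * b ^ (-γ - 1) / 2 * (v - w) ^ 2 / (γ - 1) := by field_simp; ring
    _ ≤ (v ^ (1 - γ) - w ^ (1 - γ) - (1 - γ) * w ^ (-γ) * (v - w)) / (γ - 1) := by gcongr
    _ = QRel γ v w := by simp only [QRel, intE, pres]; field_simp; ring

theorem mul_sq_le_pRel {γ b v w : ℝ} (hγ : 0 ≤ γ) (hv : v ∈ Set.Ioo 0 b)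
    (hw : w ∈ Set.Ioo 0 b) :
    γ * (γ + 1) * b ^ (-γ - 2) / 2 * (v - w) ^ 2 ≤ pRel γ v w := by
  simp only [pRel, pres]
  convert rpow_bregman_lower_bound (r := -γ) (by linarith) hv hw using 1 <;> ring

theorem le_mul_of_mul_le_of_inv_le {m C t y : ℝ} (hm : 0 < m) (hC : m⁻¹ ≤ C) (ht : 0 ≤ t)
    (h : m * t ≤ y) : t ≤ C * y :=
  calc t = m⁻¹ * (m * t) := by field_simp
    _ ≤ m⁻¹ * y := by gcongr
    _ ≤ C * y := by gcongr; exact (mul_nonneg hm.le ht).trans h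

/-- Let `γ > 1` and `v₊ > 0` be given.  Then there exists a constant `C > 0`
such that for any `v, v̄` with `0 < v̄ < 2v₊` and `0 < v < 3v₊`, one has
`|v − v̄|² ≤ C·Q(v|v̄)` and `|v − v̄|² ≤ C·p(v|v̄)`. -/
theorem relative_quantities_quadratic_lower_bound
    (γ vplus : ℝ) (hγ : 1 < γ) (hvplus : 0 < vplus) :
    ∃ C > 0, ∀ v w : ℝ, 0 < w → w < 2 * vplus → 0 < v → v < 3 * vplus →
      |v - w| ^ 2 ≤ C * QRel γ v w ∧ |v - w| ^ 2 ≤ C * pRel γ v w := by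
  have hγ0 : 0 < γ := by linarith
  set b := 3 * vplus
  set mQ := γ * b ^ (-γ - 1) / 2
  set mp := γ * (γ + 1) * b ^ (-γ - 2) / 2
  have hmQ : 0 < mQ := by positivity
  have hmp : 0 < mp := by positivity
  refine ⟨max mQ⁻¹ mp⁻¹, lt_max_of_lt_left (inv_pos.2 hmQ), fun v w hw hw2 hv hv3 ↦ ?_⟩
  have hvb : v ∈ Set.Ioo 0 b := ⟨hv, hv3⟩
  have hwb : w ∈ Set.Ioo 0 b := ⟨hw, by linarith⟩
  rw [sq_abs]
  exact ⟨le_mul_of_mul_le_of_inv_le hmQ (le_max_left _ _) (sq_nonneg _)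
      (mul_sq_le_QRel hγ hvb hwb),
    le_mul_of_mul_le_of_inv_le hmp (le_max_right _ _) (sq_nonneg _)
      (mul_sq_le_pRel hγ0.le hvb hwb)⟩
end
end

section
/- Let γ > 1 and v₊ > 0 be given. Then there exist constants C > 0 and δ* > 0 such that for any 0 < δ < δ* and any v, v̄ > 0 satisfying |p(v) − p(v̄)| < δ and |p(v̄) − p(v₊)| < δ, the following three inequalities hold: (i) p(v|v̄) ≤ ((γ+1)/(2γ p(v̄)) + Cδ)|p(v) − p(v̄)|²; (ii) Q(v|v̄) ≥ (p(v̄)^{−1/γ−1}/(2γ))|p(v) − p(v̄)|² − ((1+γ)/(3γ²)) p(v̄)^{−1/γ−2}(p(v) − p(v̄))³; (iii) Q(v|v̄) ≤ (p(v̄)^{−1/γ−1}/(2γ) + Cδ)|p(v) − p(v̄)|². -/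
/-!
With `β = 1/γ` and `u = p(v)/p(v̄)` one has `v/v̄ = u^(-β)`, so both relative quantities factor
through profiles of `u` alone: `p(v|v̄) = p(v̄) F(u)` and `Q(v|v̄) = v̄ p(v̄) G(u)`, where
`F = pressureProfile β` and `G = energyProfile β` vanish to second order at `u = 1`. The
estimates are Taylor expansions of `F` and `G` at `1`: their third derivatives are bounded on
`[1/2, 3/2]`, which gives an `O(|u - 1|^3)` error that `C δ` absorbs, and `G'''' ≥ 0` on `(0, 3]`
makes the cubic Taylor polynomial of `G` an exact lower bound. Taking `δ* = p(v₊)/4` keeps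
`p(v̄) ≥ p(v₊)/2` and `u` in `[1/2, 3/2]`.
-/

open Real

noncomputable section

open Set

section Taylor

variable {f f₁ f₂ f₃ f₄ : ℝ → ℝ} {s : Set ℝ} {a x : ℝ}

theorem abs_le_mul_abs_sub_pow_succ_of_hasDerivAt [s.OrdConnected] {K : ℝ} {n : ℕ} (hK : 0 ≤ K)
    (ha : a ∈ s) (h0 : f a = 0) (hf : ∀ y ∈ s, HasDerivAt f (f₁ y) y)
    (hf₁ : ∀ y ∈ s, |f₁ y| ≤ K * |y - a| ^ n) (hx : x ∈ s) :
    |f x| ≤ K * |x - a| ^ (n + 1) := by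
  have hsub : uIcc a x ⊆ s := OrdConnected.uIcc_subset ‹_› ha hx
  have := (convex_uIcc a x).norm_image_sub_le_of_norm_hasDerivWithin_le (C := K * |x - a| ^ n)
    (fun y hy => (hf y (hsub hy)).hasDerivWithinAt)
    (fun y hy => (hf₁ y (hsub hy)).trans (mul_le_mul_of_nonneg_left
      (pow_le_pow_left₀ (abs_nonneg _) (abs_sub_left_of_mem_uIcc hy) n) hK))
    left_mem_uIcc right_mem_uIcc
  simpa [h0, pow_succ, mul_assoc] using this

theorem abs_sub_taylor_two_le [s.OrdConnected] {A M : ℝ} (ha : a ∈ s)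
    (hf : ∀ y ∈ s, HasDerivAt f (f₁ y) y) (hf₁ : ∀ y ∈ s, HasDerivAt f₁ (f₂ y) y)
    (hf₂ : ∀ y ∈ s, HasDerivAt f₂ (f₃ y) y) (h0 : f a = 0) (h1 : f₁ a = 0) (h2 : f₂ a = A)
    (hf₃ : ∀ y ∈ s, |f₃ y| ≤ M) (hx : x ∈ s) :
    |f x - A / 2 * (x - a) ^ 2| ≤ M * |x - a| ^ 3 := by
  have hM : 0 ≤ M := (abs_nonneg _).trans (hf₃ a ha)
  have hline : ∀ y, HasDerivAt (fun z => z - a) 1 y := fun y => (hasDerivAt_id y).sub_const a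
  have e2 : ∀ y ∈ s, |f₂ y - A| ≤ M * |y - a| ^ 1 := fun y hy =>
    abs_le_mul_abs_sub_pow_succ_of_hasDerivAt (n := 0) hM ha (by simp [h2])
      (fun z hz => (hf₂ z hz).sub_const A) (by simpa using hf₃) hy
  have e1 : ∀ y ∈ s, |f₁ y - A * (y - a)| ≤ M * |y - a| ^ 2 := fun y hy =>
    abs_le_mul_abs_sub_pow_succ_of_hasDerivAt hM ha (by simp [h1])
      (fun z hz => ((hf₁ z hz).sub ((hline z).const_mul A)).congr_deriv (by ring)) e2 hy
  exact abs_le_mul_abs_sub_pow_succ_of_hasDerivAt hM ha (by simp [h0])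
    (fun z hz => ((hf z hz).sub (((hline z).pow 2).const_mul (A / 2))).congr_deriv (by simp; ring))
    e1 hx

theorem exists_abs_sub_taylor_two_le {c d A : ℝ} (ha : a ∈ Icc c d)
    (hf : ∀ y ∈ Icc c d, HasDerivAt f (f₁ y) y) (hf₁ : ∀ y ∈ Icc c d, HasDerivAt f₁ (f₂ y) y)
    (hf₂ : ∀ y ∈ Icc c d, HasDerivAt f₂ (f₃ y) y) (hf₃ : ContinuousOn f₃ (Icc c d))
    (h0 : f a = 0) (h1 : f₁ a = 0) (h2 : f₂ a = A) :
    ∃ M > 0, ∀ x ∈ Icc c d, |f x - A / 2 * (x - a) ^ 2| ≤ M * |x - a| ^ 3 := by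
  obtain ⟨M, hM⟩ := isCompact_Icc.exists_bound_of_continuousOn hf₃
  exact ⟨max M 1, by positivity, fun x hx => abs_sub_taylor_two_le ha hf hf₁ hf₂ h0 h1 h2
    (fun y hy => (hM y hy).trans (le_max_left _ _)) hx⟩

theorem add_mul_sub_le_of_hasDerivAt2_nonneg (hs : Convex ℝ s) (ha : a ∈ s) (hx : x ∈ s)
    (hf : ∀ y ∈ s, HasDerivAt f (f₁ y) y) (hf₁ : ∀ y ∈ s, HasDerivAt f₁ (f₂ y) y)
    (hf₂ : ∀ y ∈ s, 0 ≤ f₂ y) : f a + f₁ a * (x - a) ≤ f x := by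
  have hconv : ConvexOn ℝ s f := convexOn_of_hasDerivWithinAt2_nonneg hs
    (fun y hy => (hf y hy).continuousAt.continuousWithinAt)
    (fun y hy => (hf y (interior_subset hy)).hasDerivWithinAt)
    (fun y hy => (hf₁ y (interior_subset hy)).hasDerivWithinAt)
    (fun y hy => hf₂ y (interior_subset hy))
  rcases lt_trichotomy a x with hax | rfl | hxa
  · have := hconv.le_slope_of_hasDerivAt ha hx hax (hf a ha)
    rw [slope_def_field, le_div_iff₀ (sub_pos.2 hax)] at this
    linarith
  · simp
  · have := hconv.slope_le_of_hasDerivAt hx ha hxa (hf a ha)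
    rw [slope_def_field, div_le_iff₀ (sub_pos.2 hxa)] at this
    linarith

theorem taylor_three_le_of_hasDerivAt4_nonneg {A B : ℝ} (hs : Convex ℝ s) (ha : a ∈ s)
    (hf : ∀ y ∈ s, HasDerivAt f (f₁ y) y) (hf₁ : ∀ y ∈ s, HasDerivAt f₁ (f₂ y) y)
    (hf₂ : ∀ y ∈ s, HasDerivAt f₂ (f₃ y) y) (hf₃ : ∀ y ∈ s, HasDerivAt f₃ (f₄ y) y)
    (h0 : f a = 0) (h1 : f₁ a = 0) (h2 : f₂ a = A) (h3 : f₃ a = B) (hf₄ : ∀ y ∈ s, 0 ≤ f₄ y)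
    (hx : x ∈ s) : A / 2 * (x - a) ^ 2 + B / 6 * (x - a) ^ 3 ≤ f x := by
  have hline : ∀ y, HasDerivAt (fun z => z - a) 1 y := fun y => (hasDerivAt_id y).sub_const a
  -- `f₂` lies above its tangent at `a`, so the cubic remainder is convex with a double zero at `a`.
  have hf₂_ge : ∀ y ∈ s, A + B * (y - a) ≤ f₂ y := fun y hy => by
    simpa [h2, h3] using add_mul_sub_le_of_hasDerivAt2_nonneg hs ha hy hf₂ hf₃ hf₄
  have hR := add_mul_sub_le_of_hasDerivAt2_nonneg hs ha hx
    (f := fun y => f y - A / 2 * (y - a) ^ 2 - B / 6 * (y - a) ^ 3)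
    (f₁ := fun y => f₁ y - A * (y - a) - B / 2 * (y - a) ^ 2)
    (f₂ := fun y => f₂ y - A - B * (y - a))
    (fun y hy => (((hf y hy).sub (((hline y).pow 2).const_mul (A / 2))).sub
      (((hline y).pow 3).const_mul (B / 6))).congr_deriv (by simp; ring))
    (fun y hy => (((hf₁ y hy).sub ((hline y).const_mul A)).sub
      (((hline y).pow 2).const_mul (B / 2))).congr_deriv (by simp; ring))
    (fun y hy => sub_nonneg.2 (by linarith [hf₂_ge y hy]))
  simp only [h0, h1] at hR
  linarith

end Taylor

section Profiles

variable {β u : ℝ}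

def pressureProfile (β u : ℝ) : ℝ := u - 1 + (u ^ (-β) - 1) / β

def energyProfile (β u : ℝ) : ℝ := β / (1 - β) * (u ^ (1 - β) - 1) + u ^ (-β) - 1

def energyProfile₁ (β u : ℝ) : ℝ := β * u ^ (-β) - β * u ^ (-β - 1)

def energyProfile₂ (β u : ℝ) : ℝ := β * (β + 1) * u ^ (-β - 2) - β ^ 2 * u ^ (-β - 1)

def energyProfile₃ (β u : ℝ) : ℝ :=
  β ^ 2 * (β + 1) * u ^ (-β - 2) - β * (β + 1) * (β + 2) * u ^ (-β - 3)

theorem hasDerivAt_const_mul_rpow (c e : ℝ) (hu : 0 < u) :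
    HasDerivAt (fun x => c * x ^ e) (c * e * u ^ (e - 1)) u := by
  simpa [mul_assoc] using (hasDerivAt_rpow_const (p := e) (Or.inl hu.ne')).const_mul c

theorem hasDerivAt_const_mul_rpow_sub (a b e₁ e₂ : ℝ) (hu : 0 < u) :
    HasDerivAt (fun x => a * x ^ e₁ - b * x ^ e₂)
      (a * e₁ * u ^ (e₁ - 1) - b * e₂ * u ^ (e₂ - 1)) u :=
  (hasDerivAt_const_mul_rpow a e₁ hu).sub (hasDerivAt_const_mul_rpow b e₂ hu)

theorem hasDerivAt_pressureProfile (hβ : β ≠ 0) (hu : 0 < u) :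
    HasDerivAt (pressureProfile β) (1 - u ^ (-β - 1)) u :=
  ((hasDerivAt_id u).sub_const 1 |>.add
    (((hasDerivAt_rpow_const (Or.inl hu.ne')).sub_const 1).div_const β)).congr_deriv
      (by field_simp; ring)

theorem hasDerivAt_energyProfile (hβ : β ≠ 1) (hu : 0 < u) :
    HasDerivAt (energyProfile β) (energyProfile₁ β u) u := by
  have := ((((hasDerivAt_rpow_const (p := 1 - β) (Or.inl hu.ne')).sub_const 1).const_mul
    (β / (1 - β))).add (hasDerivAt_rpow_const (p := -β) (Or.inl hu.ne'))).sub_const 1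
  refine this.congr_deriv ?_
  rw [energyProfile₁, show 1 - β - 1 = -β by ring]
  field_simp [sub_ne_zero.2 hβ.symm]
  ring

theorem hasDerivAt_energyProfile₁ (hu : 0 < u) :
    HasDerivAt (energyProfile₁ β) (energyProfile₂ β u) u :=
  (hasDerivAt_const_mul_rpow_sub _ _ _ _ hu).congr_deriv (by rw [energyProfile₂]; ring_nf)

theorem hasDerivAt_energyProfile₂ (hu : 0 < u) :
    HasDerivAt (energyProfile₂ β) (energyProfile₃ β u) u :=
  (hasDerivAt_const_mul_rpow_sub _ _ _ _ hu).congr_deriv (by rw [energyProfile₃]; ring_nf)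

theorem hasDerivAt_energyProfile₃ (hu : 0 < u) :
    HasDerivAt (energyProfile₃ β)
      (β * (β + 1) * (β + 2) * ((β + 3) * u ^ (-β - 4) - β * u ^ (-β - 3))) u :=
  (hasDerivAt_const_mul_rpow_sub _ _ _ _ hu).congr_deriv (by ring_nf)

theorem mem_Icc_of_abs_sub_one_le (h : |u - 1| ≤ 1 / 2) : u ∈ Icc (1 / 2 : ℝ) (3 / 2) := by
  constructor <;> linarith [abs_le.1 h]

theorem exists_abs_pressureProfile_sub_le (hβ : β ≠ 0) : ∃ M > 0, ∀ u, |u - 1| ≤ 1 / 2 →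
    |pressureProfile β u - (β + 1) / 2 * (u - 1) ^ 2| ≤ M * |u - 1| ^ 3 := by
  have hpos : ∀ u ∈ Icc (1 / 2 : ℝ) (3 / 2), 0 < u := fun u hu => by linarith [hu.1]
  obtain ⟨M, hM, hbound⟩ := exists_abs_sub_taylor_two_le (a := 1) (A := β + 1)
    (f₁ := fun u => 1 - u ^ (-β - 1)) (f₂ := fun u => (β + 1) * u ^ (-β - 2))
    (f₃ := fun u => -(β + 1) * (β + 2) * u ^ (-β - 3))
    (by norm_num) (fun u hu => hasDerivAt_pressureProfile hβ (hpos u hu))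
    (fun u hu => ((hasDerivAt_rpow_const (p := -β - 1) (Or.inl (hpos u hu).ne')).const_sub 1
      |>.congr_deriv (by ring_nf)))
    (fun u hu => (hasDerivAt_const_mul_rpow _ _ (hpos u hu)).congr_deriv (by ring_nf))
    (fun u hu => (hasDerivAt_const_mul_rpow _ _ (hpos u hu)).continuousAt.continuousWithinAt)
    (by simp [pressureProfile]) (by simp) (by simp)
  exact ⟨M, hM, fun u hu => hbound u (mem_Icc_of_abs_sub_one_le hu)⟩

theorem exists_abs_energyProfile_sub_le (hβ : β ≠ 1) : ∃ M > 0, ∀ u, |u - 1| ≤ 1 / 2 →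
    |energyProfile β u - β / 2 * (u - 1) ^ 2| ≤ M * |u - 1| ^ 3 := by
  have hpos : ∀ u ∈ Icc (1 / 2 : ℝ) (3 / 2), 0 < u := fun u hu => by linarith [hu.1]
  obtain ⟨M, hM, hbound⟩ := exists_abs_sub_taylor_two_le (a := 1) (by norm_num)
    (fun u hu => hasDerivAt_energyProfile hβ (hpos u hu))
    (fun u hu => hasDerivAt_energyProfile₁ (hpos u hu))
    (fun u hu => hasDerivAt_energyProfile₂ (hpos u hu))
    (fun u hu => (hasDerivAt_energyProfile₃ (hpos u hu)).continuousAt.continuousWithinAt)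
    (by simp [energyProfile]) (by simp [energyProfile₁]) (by simp [energyProfile₂]; ring)
  exact ⟨M, hM, fun u hu => hbound u (mem_Icc_of_abs_sub_one_le hu)⟩

theorem energyProfile_ge (hβ₀ : 0 ≤ β) (hβ₁ : β < 1) (hu : u ∈ Ioc 0 3) :
    β / 2 * (u - 1) ^ 2 - β * (β + 1) / 3 * (u - 1) ^ 3 ≤ energyProfile β u := by
  have h := taylor_three_le_of_hasDerivAt4_nonneg (a := 1) (A := β) (B := -2 * β * (β + 1))
    (convex_Ioc 0 3) (by norm_num)
    (fun u hu => hasDerivAt_energyProfile hβ₁.ne hu.1) (fun u hu => hasDerivAt_energyProfile₁ hu.1)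
    (fun u hu => hasDerivAt_energyProfile₂ hu.1) (fun u hu => hasDerivAt_energyProfile₃ hu.1)
    (by simp [energyProfile]) (by simp [energyProfile₁]) (by simp [energyProfile₂]; ring)
    (by simp [energyProfile₃]; ring) ?_ hu
  · linarith
  · intro x ⟨hx₀, hx₃⟩
    have hfactor : 0 ≤ β + 3 - β * x := by nlinarith
    calc (0 : ℝ) ≤ β * (β + 1) * (β + 2) * ((β + 3 - β * x) * x ^ (-β - 4)) := by
          exact mul_nonneg (by positivity) (mul_nonneg hfactor (by positivity))
      _ = _ := by rw [show -β - 3 = (-β - 4) + 1 by ring, rpow_add_one hx₀.ne']; ring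

end Profiles

section Scaling

variable {γ v w : ℝ}

theorem pres_pos (γ : ℝ) (hv : 0 < v) : 0 < pres γ v := rpow_pos_of_pos hv _

theorem rpow_one_sub_eq_mul {x : ℝ} (hx : 0 < x) (y : ℝ) : x ^ (1 - y) = x * x ^ (-y) := by
  rw [sub_eq_add_neg, rpow_add hx, rpow_one]

theorem pres_rpow_neg_inv (hγ : γ ≠ 0) (hw : 0 < w) : pres γ w ^ (-γ⁻¹) = w := by
  rw [pres, ← inv_neg, rpow_rpow_inv hw.le (neg_ne_zero.2 hγ)]

theorem pres_rpow_neg_inv_sub (hγ : γ ≠ 0) (hw : 0 < w) (n : ℕ) :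
    pres γ w ^ (-1 / γ - n) = w / pres γ w ^ n := by
  rw [rpow_sub_natCast (pres_pos γ hw).ne', neg_div, one_div, pres_rpow_neg_inv hγ hw]

theorem div_pres_rpow_neg_inv (hγ : γ ≠ 0) (hv : 0 < v) (hw : 0 < w) :
    (pres γ v / pres γ w) ^ (-γ⁻¹) = v / w := by
  rw [div_rpow (pres_pos γ hv).le (pres_pos γ hw).le, pres_rpow_neg_inv hγ hv,
    pres_rpow_neg_inv hγ hw]

theorem pRel_eq (hγ : γ ≠ 0) (hv : 0 < v) (hw : 0 < w) :
    pRel γ v w = pres γ w * pressureProfile γ⁻¹ (pres γ v / pres γ w) := by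
  have hq := pres_pos γ hw
  rw [pRel, pressureProfile, div_pres_rpow_neg_inv hγ hv hw, rpow_sub_one hw.ne', ← pres]
  field_simp

theorem QRel_eq (hγ₀ : γ ≠ 0) (hγ₁ : γ ≠ 1) (hv : 0 < v) (hw : 0 < w) :
    QRel γ v w = w * pres γ w * energyProfile γ⁻¹ (pres γ v / pres γ w) := by
  have hp := pres_pos γ hv
  have hq := pres_pos γ hw
  rw [QRel, intE, intE, energyProfile, rpow_one_sub_eq_mul (div_pos hp hq),
    div_pres_rpow_neg_inv hγ₀ hv hw, rpow_one_sub_eq_mul hv, rpow_one_sub_eq_mul hw, ← pres, ← pres]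
  have : γ - 1 ≠ 0 := sub_ne_zero.2 hγ₁
  field_simp
  ring

end Scaling

section Estimates

variable {γ : ℝ}

theorem abs_div_sub_one {p q : ℝ} (hq : 0 < q) : |p / q - 1| = |p - q| / q := by
  rw [div_sub_one hq.ne', abs_div, abs_of_pos hq]

theorem exists_pRel_le (hγ : γ ≠ 0) : ∃ M > 0, ∀ v w, 0 < v → 0 < w →
    |pres γ v - pres γ w| ≤ pres γ w / 2 →
    pRel γ v w ≤ ((γ + 1) / (2 * γ * pres γ w)
      + M * pres γ w ^ (-2 : ℝ) * |pres γ v - pres γ w|) * |pres γ v - pres γ w| ^ 2 := by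
  obtain ⟨M, hM, hF⟩ := exists_abs_pressureProfile_sub_le (inv_ne_zero hγ)
  refine ⟨M, hM, fun v w hv hw hclose => ?_⟩
  have hq := pres_pos γ hw
  set p := pres γ v
  set q := pres γ w
  have hs : |p / q - 1| = |p - q| / q := abs_div_sub_one hq
  have hu : |p / q - 1| ≤ 1 / 2 := by rw [hs, div_le_iff₀ hq]; linarith
  rw [pRel_eq hγ hv hw, rpow_neg hq.le, rpow_two]
  calc q * pressureProfile γ⁻¹ (p / q)
      ≤ q * ((γ⁻¹ + 1) / 2 * |p / q - 1| ^ 2 + M * |p / q - 1| ^ 3) := by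
        gcongr
        rw [sq_abs]
        linarith [(abs_le.1 (hF _ hu)).2]
    _ = _ := by rw [hs]; field_simp; ring

theorem exists_QRel_le (hγ₀ : γ ≠ 0) (hγ₁ : γ ≠ 1) : ∃ M > 0, ∀ v w, 0 < v → 0 < w →
    |pres γ v - pres γ w| ≤ pres γ w / 2 →
    QRel γ v w ≤ (pres γ w ^ (-1/γ - 1) / (2 * γ)
      + M * pres γ w ^ (-1/γ - 2) * |pres γ v - pres γ w|) * |pres γ v - pres γ w| ^ 2 := by
  obtain ⟨M, hM, hG⟩ := exists_abs_energyProfile_sub_le (β := γ⁻¹) (by simpa using hγ₁)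
  refine ⟨M, hM, fun v w hv hw hclose => ?_⟩
  have hq := pres_pos γ hw
  have h₁ : pres γ w ^ (-1/γ - 1) = w / pres γ w := by
    simpa using pres_rpow_neg_inv_sub hγ₀ hw 1
  have h₂ : pres γ w ^ (-1/γ - 2) = w / pres γ w ^ 2 := by
    exact_mod_cast pres_rpow_neg_inv_sub hγ₀ hw 2
  set p := pres γ v
  set q := pres γ w
  have hs : |p / q - 1| = |p - q| / q := abs_div_sub_one hq
  have hu : |p / q - 1| ≤ 1 / 2 := by rw [hs, div_le_iff₀ hq]; linarith
  rw [QRel_eq hγ₀ hγ₁ hv hw, h₁, h₂]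
  calc w * q * energyProfile γ⁻¹ (p / q)
      ≤ w * q * (γ⁻¹ / 2 * |p / q - 1| ^ 2 + M * |p / q - 1| ^ 3) := by
        gcongr
        rw [sq_abs]
        linarith [(abs_le.1 (hG _ hu)).2]
    _ = _ := by rw [hs]; field_simp

theorem QRel_ge {v w : ℝ} (hγ : 1 < γ) (hv : 0 < v) (hw : 0 < w)
    (hpq : pres γ v ≤ 3 * pres γ w) :
    QRel γ v w ≥ pres γ w ^ (-1/γ - 1) / (2 * γ) * |pres γ v - pres γ w| ^ 2
      - (1 + γ) / (3 * γ ^ 2) * pres γ w ^ (-1/γ - 2) * (pres γ v - pres γ w) ^ 3 := by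
  have hγ₀ : γ ≠ 0 := by positivity
  have hp := pres_pos γ hv
  have hq := pres_pos γ hw
  have h₁ : pres γ w ^ (-1/γ - 1) = w / pres γ w := by
    simpa using pres_rpow_neg_inv_sub hγ₀ hw 1
  have h₂ : pres γ w ^ (-1/γ - 2) = w / pres γ w ^ 2 := by
    exact_mod_cast pres_rpow_neg_inv_sub hγ₀ hw 2
  have hG := energyProfile_ge (β := γ⁻¹) (by positivity) (inv_lt_one_of_one_lt₀ hγ)
    ⟨div_pos hp hq, (div_le_iff₀ hq).2 hpq⟩
  rw [ge_iff_le, QRel_eq hγ₀ hγ.ne' hv hw, h₁, h₂, sq_abs]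
  calc _ = w * pres γ w * (γ⁻¹ / 2 * (pres γ v / pres γ w - 1) ^ 2
        - γ⁻¹ * (γ⁻¹ + 1) / 3 * (pres γ v / pres γ w - 1) ^ 3) := by field_simp
    _ ≤ _ := by gcongr

end Estimates

/-- Let `γ > 1` and `v₊ > 0` be given.  Then there exist constants `C > 0` and
`δ* > 0` such that for any `0 < δ < δ*` and any `v, v̄ > 0` satisfying `|p(v) − p(v̄)| < δ`
and `|p(v̄) − p(v₊)| < δ`, the three stated inequalities hold. -/
theorem relative_quantities_sharp_estimates
    (γ vplus : ℝ) (hγ : 1 < γ) (hvplus : 0 < vplus) :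
    ∃ C > 0, ∃ δstar > 0, ∀ δ : ℝ, 0 < δ → δ < δstar → ∀ v w : ℝ, 0 < v → 0 < w →
      |pres γ v - pres γ w| < δ → |pres γ w - pres γ vplus| < δ →
      (pRel γ v w ≤ ((γ + 1) / (2 * γ * pres γ w) + C * δ) * |pres γ v - pres γ w| ^ 2) ∧
      (QRel γ v w ≥ (pres γ w ^ (-1/γ - 1)) / (2 * γ) * |pres γ v - pres γ w| ^ 2
          - (1 + γ) / (3 * γ ^ 2) * pres γ w ^ (-1/γ - 2)
              * (pres γ v - pres γ w) ^ 3) ∧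
      (QRel γ v w ≤ ((pres γ w ^ (-1/γ - 1)) / (2 * γ) + C * δ)
          * |pres γ v - pres γ w| ^ 2) := by
  have hγ₀ : γ ≠ 0 := by positivity
  obtain ⟨M₁, hM₁, hpRel⟩ := exists_pRel_le hγ₀
  obtain ⟨M₂, hM₂, hQRel⟩ := exists_QRel_le hγ₀ hγ.ne'
  set P := pres γ vplus
  have hP : 0 < P := pres_pos γ hvplus
  set C := M₁ * (P / 2) ^ (-2 : ℝ) + M₂ * (P / 2) ^ (-1/γ - 2)
  refine ⟨C, by positivity, P / 4, by positivity, fun δ hδ hδP v w hv hw hvw hwP => ?_⟩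
  have hq : P / 2 ≤ pres γ w := by linarith [(abs_lt.1 hwP).1]
  have hclose : |pres γ v - pres γ w| ≤ pres γ w / 2 := by linarith
  have hmono : ∀ e ≤ (0 : ℝ), pres γ w ^ e ≤ (P / 2) ^ e :=
    fun e he => rpow_le_rpow_of_nonpos (by positivity) hq he
  have hC₁ : M₁ * pres γ w ^ (-2 : ℝ) ≤ C := le_add_of_le_of_nonneg
    (mul_le_mul_of_nonneg_left (hmono _ (by norm_num)) hM₁.le) (by positivity)
  have hexp : -1/γ - 2 ≤ 0 := by
    have : 0 < 1 / γ := by positivity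
    linarith [neg_div γ 1]
  have hC₂ : M₂ * pres γ w ^ (-1/γ - 2) ≤ C := le_add_of_nonneg_of_le
    (by positivity) (mul_le_mul_of_nonneg_left (hmono _ hexp) hM₂.le)
  refine ⟨(hpRel v w hv hw hclose).trans ?_, QRel_ge hγ hv hw (by linarith [abs_le.1 hclose]),
    (hQRel v w hv hw hclose).trans ?_⟩ <;> gcongr
end
end

section
/- For any c < d and any function f : [c,d] → ℝ (differentiable, with derivative f') satisfying ∫_c^d (y−c)(d−y)|f'(y)|² dy < ∞, one has ∫_c^d |f(y) − (1/(d−c))∫_c^d f(z) dz|² dy ≤ (1/2)∫_c^d (y−c)(d−y)|f'(y)|² dy. -/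
/-!
Write `m` for the mean of `f` and `w t = (t - c) (d - t)`. Expanding squares,
`2 (d - c) ∫ (f - m)² = ∫∫ (f x - f y)²`. By the fundamental theorem of calculus and
Cauchy–Schwarz, `(f x - f y)² ≤ |x - y| ∫ f'²` over the interval between `y` and `x`.
After Tonelli, `f'(t)²` is weighted by `∫∫ |x - y|` over the pairs `(x, y)` separated by `t`,
which equals `(d - c) w t`. This gives `2 (d - c) ∫ (f - m)² ≤ (d - c) ∫ w f'²`.
-/

open MeasureTheory intervalIntegral Set
open scoped ENNReal

section Quadratic

variable {α : Type*} [MeasurableSpace α] {μ : Measure α} [IsFiniteMeasure μ] {f : α → ℝ}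

theorem eq_zero_of_measureReal_univ_eq_zero (h : μ.real univ = 0) : μ = 0 :=
  Measure.measure_univ_eq_zero.mp ((measureReal_eq_zero_iff).mp h)

theorem integral_quadratic (hf : MemLp f 2 μ) (a b k : ℝ) :
    ∫ x, (a * f x ^ 2 + b * f x + k) ∂μ
      = a * ∫ x, f x ^ 2 ∂μ + b * ∫ x, f x ∂μ + k * μ.real univ := by
  have h2 : Integrable (fun x => a * f x ^ 2) μ := hf.integrable_sq.const_mul a
  have h1 : Integrable (fun x => b * f x) μ := (hf.integrable one_le_two).const_mul b
  have h21 : Integrable (fun x => a * f x ^ 2 + b * f x) μ := h2.add h1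
  rw [integral_add h21 (integrable_const k), integral_add h2 h1, MeasureTheory.integral_const_mul,
    MeasureTheory.integral_const_mul, MeasureTheory.integral_const, smul_eq_mul, mul_comm k]

theorem sq_integral_le_measureReal_mul_integral_sq (hf : MemLp f 2 μ) :
    (∫ x, f x ∂μ) ^ 2 ≤ μ.real univ * ∫ x, f x ^ 2 ∂μ := by
  set M := μ.real univ
  set T := ∫ x, f x ∂μ
  rcases measureReal_nonneg.eq_or_lt with hM | hM
  · obtain rfl : μ = 0 := eq_zero_of_measureReal_univ_eq_zero hM.symm
    simp [T]
  · have hvar : ∫ x, (M * f x - T) ^ 2 ∂μ = M * (M * ∫ x, f x ^ 2 ∂μ - T ^ 2) := by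
      rw [integral_congr_ae (ae_of_all _ fun x => by ring : (fun x => (M * f x - T) ^ 2)
        =ᵐ[μ] fun x => M ^ 2 * f x ^ 2 + (-2 * M * T) * f x + T ^ 2), integral_quadratic hf]
      ring
    have hnonneg := hvar ▸ integral_nonneg fun x => sq_nonneg (M * f x - T)
    nlinarith [(mul_nonneg_iff_of_pos_left hM).mp hnonneg]

theorem measureReal_mul_integral_sub_average_sq (hf : MemLp f 2 μ) :
    μ.real univ * ∫ x, (f x - 1 / μ.real univ * ∫ y, f y ∂μ) ^ 2 ∂μ
      = μ.real univ * ∫ x, f x ^ 2 ∂μ - (∫ x, f x ∂μ) ^ 2 := by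
  set M := μ.real univ
  set T := ∫ x, f x ∂μ
  rcases eq_or_ne M 0 with hM | hM
  · obtain rfl : μ = 0 := eq_zero_of_measureReal_univ_eq_zero hM
    simp [T]
  · rw [integral_congr_ae (ae_of_all _ fun x => by ring : (fun x => (f x - 1 / M * T) ^ 2)
      =ᵐ[μ] fun x => 1 * f x ^ 2 + (-2 * (1 / M * T)) * f x + (1 / M * T) ^ 2),
      integral_quadratic hf]
    field_simp
    ring

theorem lintegral_lintegral_ofReal_sub_sq (hf : MemLp f 2 μ) :
    ∫⁻ x, ∫⁻ y, ENNReal.ofReal ((f x - f y) ^ 2) ∂μ ∂μ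
      = ENNReal.ofReal (2 * (μ.real univ * ∫ x, f x ^ 2 ∂μ - (∫ x, f x ∂μ) ^ 2)) := by
  set M := μ.real univ with hM
  set T := ∫ x, f x ∂μ with hT
  set Q := ∫ x, f x ^ 2 ∂μ with hQ
  have hinner (x : α) : ∫ y, (f x - f y) ^ 2 ∂μ = M * f x ^ 2 + (-2 * T) * f x + Q := by
    rw [integral_congr_ae (ae_of_all _ fun y => by ring : (fun y => (f x - f y) ^ 2)
      =ᵐ[μ] fun y => 1 * f y ^ 2 + (-2 * f x) * f y + f x ^ 2), integral_quadratic hf]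
    ring
  have hinner_nonneg (x : α) : 0 ≤ M * f x ^ 2 + (-2 * T) * f x + Q :=
    hinner x ▸ integral_nonneg fun y => sq_nonneg _
  have hint : Integrable (fun x => M * f x ^ 2 + (-2 * T) * f x + Q) μ :=
    ((hf.integrable_sq.const_mul M).add ((hf.integrable one_le_two).const_mul _)).add
      (integrable_const Q)
  calc ∫⁻ x, ∫⁻ y, ENNReal.ofReal ((f x - f y) ^ 2) ∂μ ∂μ
      = ∫⁻ x, ENNReal.ofReal (M * f x ^ 2 + (-2 * T) * f x + Q) ∂μ := by
        refine lintegral_congr fun x => ?_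
        have hx : Integrable (fun y => (f x - f y) ^ 2) μ :=
          ((memLp_const (f x)).sub hf).integrable_sq
        rw [← hinner x, ofReal_integral_eq_lintegral_ofReal hx (ae_of_all _ fun y => sq_nonneg _)]
    _ = ENNReal.ofReal (∫ x, (M * f x ^ 2 + (-2 * T) * f x + Q) ∂μ) :=
        (ofReal_integral_eq_lintegral_ofReal hint (ae_of_all _ hinner_nonneg)).symm
    _ = ENNReal.ofReal (2 * (M * Q - T ^ 2)) := by
        rw [integral_quadratic hf, ← hM, ← hT, ← hQ]
        ring_nf

end Quadratic

theorem sq_sub_le_mul_integral_sq_of_hasDerivAt {f f' : ℝ → ℝ} {a b : ℝ} (hab : a ≤ b)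
    (hf : ∀ t ∈ Icc a b, HasDerivAt f (f' t) t) (hf' : MemLp f' 2 (volume.restrict (Ioc a b))) :
    (f b - f a) ^ 2 ≤ (b - a) * ∫ t in Ioc a b, f' t ^ 2 := by
  have hint : IntervalIntegrable f' volume a b :=
    (intervalIntegrable_iff_integrableOn_Ioc_of_le hab).2 (hf'.integrable one_le_two)
  rw [← integral_eq_sub_of_hasDerivAt (uIcc_of_le hab ▸ hf) hint, integral_of_le hab]
  simpa [measureReal_restrict_apply_univ, Real.volume_real_Ioc_of_le hab] using
    sq_integral_le_measureReal_mul_integral_sq hf'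

theorem memLp_two_Ioc_of_integrableOn_weight_mul_sq {c d a b : ℝ} {g : ℝ → ℝ}
    (hca : c < a) (hbd : b < d) (hg : AEStronglyMeasurable g (volume.restrict (Ioc a b)))
    (hfin : IntegrableOn (fun t => (t - c) * (d - t) * g t ^ 2) (Ioo c d)) :
    MemLp g 2 (volume.restrict (Ioc a b)) := by
  have hm : 0 < (a - c) * (d - b) := mul_pos (sub_pos.2 hca) (sub_pos.2 hbd)
  have hsub : Ioc a b ⊆ Ioo c d := fun t ht => ⟨hca.trans ht.1, ht.2.trans_lt hbd⟩
  rw [memLp_two_iff_integrable_sq hg]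
  refine ((hfin.mono_set hsub).const_mul ((a - c) * (d - b))⁻¹).mono' (hg.pow 2) ?_
  filter_upwards [ae_restrict_mem measurableSet_Ioc] with t ht
  rw [Real.norm_of_nonneg (sq_nonneg _), le_inv_mul_iff₀ hm]
  have hw : (a - c) * (d - b) ≤ (t - c) * (d - t) :=
    mul_le_mul (by linarith [ht.1]) (by linarith [ht.2]) (by linarith) (by linarith [ht.1])
  exact mul_le_mul_of_nonneg_right hw (sq_nonneg _)

theorem setLIntegral_Ioo_ofReal {h : ℝ → ℝ} {a b : ℝ} (hab : a ≤ b) (hh : Continuous h)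
    (hnn : ∀ x ∈ Ioo a b, 0 ≤ h x) :
    ∫⁻ x in Ioo a b, ENNReal.ofReal (h x) = ENNReal.ofReal (∫ x in a..b, h x) := by
  rw [integral_of_le hab, integral_Ioc_eq_integral_Ioo, ofReal_integral_eq_lintegral_ofReal
    (hh.integrableOn_Icc.mono_set Ioo_subset_Icc_self)
    (ae_restrict_of_forall_mem measurableSet_Ioo hnn)]

theorem lintegral_Ioo_lintegral_Ioo_ofReal_sub {c t d : ℝ} (hct : c ≤ t) (htd : t ≤ d) :
    ∫⁻ x in Ioo t d, ∫⁻ y in Ioo c t, ENNReal.ofReal (x - y)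
      = ENNReal.ofReal ((d - c) * ((t - c) * (d - t)) / 2) := by
  have hinner (x : ℝ) (hx : x ∈ Ioo t d) : ∫⁻ y in Ioo c t, ENNReal.ofReal (x - y)
      = ENNReal.ofReal ((t - c) * (x - (t + c) / 2)) := by
    rw [setLIntegral_Ioo_ofReal hct (by fun_prop) fun y hy => by linarith [hy.2, hx.1],
      intervalIntegral.integral_sub intervalIntegrable_const intervalIntegrable_id]
    simp only [intervalIntegral.integral_const, smul_eq_mul, integral_id]
    ring_nf
  rw [setLIntegral_congr_fun measurableSet_Ioo hinner,
    setLIntegral_Ioo_ofReal htd (by fun_prop) fun x hx => by nlinarith [hx.1],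
    intervalIntegral.integral_const_mul, intervalIntegral.integral_sub intervalIntegrable_id
      intervalIntegrable_const, integral_id, intervalIntegral.integral_const, smul_eq_mul]
  ring_nf

theorem ofReal_abs_sub_mul_indicator_uIoc (t x y : ℝ) :
    ENNReal.ofReal |x - y| * (uIoc y x).indicator 1 t
      = (Ici t).indicator (fun x => (Iio t).indicator (fun y => ENNReal.ofReal (x - y)) y) x
        + (Ici t).indicator (fun y => (Iio t).indicator (fun x => ENNReal.ofReal (y - x)) x) y := by
  rcases le_or_gt t x with hx | hx <;> rcases le_or_gt t y with hy | hy
  · simp [hx, hy, mem_uIoc, not_lt.2]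
  · simp [hx, hy, hy.le.trans hx]
  · simp [hx, hy, abs_sub_comm x y, (hx.trans_le hy).le]
  · simp [hx, hy, mem_uIoc]

theorem lintegral_lintegral_ofReal_abs_sub_mul_indicator_uIoc {c t d : ℝ} (ht : t ∈ Ioo c d) :
    ∫⁻ x in Ioo c d, ∫⁻ y in Ioo c d, ENNReal.ofReal |x - y| * (uIoc y x).indicator 1 t
      = ENNReal.ofReal ((d - c) * ((t - c) * (d - t))) := by
  set B : ℝ → ℝ → ℝ≥0∞ := fun x y =>
    (Ici t).indicator (fun x => (Iio t).indicator (fun y => ENNReal.ofReal (x - y)) y) x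
  have hB : Measurable (Function.uncurry B) := by
    have : Function.uncurry B = (Ici t ×ˢ Iio t).indicator fun p => ENNReal.ofReal (p.1 - p.2) := by
      ext ⟨x, y⟩
      simp only [B, Function.uncurry, indicator, mem_prod, ite_and]
      rfl
    rw [this]
    exact Measurable.indicator (by fun_prop) (measurableSet_Ici.prod measurableSet_Iio)
  have hIci : Ioo c d ∩ Ici t = Ico t d := by
    ext x
    exact ⟨fun ⟨⟨_, h2⟩, h3⟩ => ⟨h3, h2⟩, fun ⟨h1, h2⟩ => ⟨⟨ht.1.trans_le h1, h2⟩, h1⟩⟩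
  have hIio : Ioo c d ∩ Iio t = Ioo c t := by
    ext x
    exact ⟨fun ⟨⟨h1, _⟩, h3⟩ => ⟨h1, h3⟩, fun ⟨h1, h2⟩ => ⟨⟨h1, h2.trans ht.2⟩, h2⟩⟩
  have hB_half : ∫⁻ x in Ioo c d, ∫⁻ y in Ioo c d, B x y
      = ENNReal.ofReal ((d - c) * ((t - c) * (d - t)) / 2) := by
    have hinner (x : ℝ) : ∫⁻ y in Ioo c d, B x y
        = (Ici t).indicator (fun x => ∫⁻ y in Ioo c t, ENNReal.ofReal (x - y)) x := by
      by_cases hx : x ∈ Ici t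
      · simp only [B, indicator_of_mem hx, lintegral_indicator measurableSet_Iio,
          Measure.restrict_restrict measurableSet_Iio, inter_comm (Iio t), hIio]
      · simp [B, indicator_of_notMem hx]
    simp_rw [hinner, lintegral_indicator measurableSet_Ici,
      Measure.restrict_restrict measurableSet_Ici, inter_comm (Ici t), hIci,
      Measure.restrict_congr_set Ioo_ae_eq_Ico.symm]
    exact lintegral_Ioo_lintegral_Ioo_ofReal_sub ht.1.le ht.2.le
  have hw : 0 ≤ (d - c) * ((t - c) * (d - t)) / 2 :=
    div_nonneg (mul_nonneg (sub_nonneg.2 (ht.1.trans ht.2).le)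
      (mul_nonneg (sub_nonneg.2 ht.1.le) (sub_nonneg.2 ht.2.le))) zero_le_two
  calc ∫⁻ x in Ioo c d, ∫⁻ y in Ioo c d, ENNReal.ofReal |x - y| * (uIoc y x).indicator 1 t
      = ∫⁻ x in Ioo c d, ∫⁻ y in Ioo c d, (B x y + B y x) :=
        lintegral_congr fun x => lintegral_congr fun y => ofReal_abs_sub_mul_indicator_uIoc t x y
    _ = (∫⁻ x in Ioo c d, ∫⁻ y in Ioo c d, B x y) + ∫⁻ x in Ioo c d, ∫⁻ y in Ioo c d, B y x := by
        have hBx : Measurable fun x => ∫⁻ y in Ioo c d, B x y := hB.lintegral_prod_right'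
        rw [← lintegral_add_left hBx]
        exact lintegral_congr fun x => lintegral_add_left (hB.comp measurable_prodMk_left) _
    _ = 2 * ∫⁻ x in Ioo c d, ∫⁻ y in Ioo c d, B x y := by
        rw [lintegral_lintegral_swap (f := fun x y => B y x)
          (hB.comp measurable_swap).aemeasurable, two_mul]
    _ = ENNReal.ofReal ((d - c) * ((t - c) * (d - t))) := by
        rw [hB_half, two_mul, ← ENNReal.ofReal_add hw hw, add_halves]

theorem lintegral_lintegral_lintegral_swap {α β γ : Type*} [MeasurableSpace α]
    [MeasurableSpace β] [MeasurableSpace γ] {μ : Measure α} {ν : Measure β} {ρ : Measure γ}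
    [SFinite μ] [SFinite ν] [SFinite ρ] {Φ : α → β → γ → ℝ≥0∞}
    (hΦ : Measurable fun p : α × β × γ => Φ p.1 p.2.1 p.2.2) :
    ∫⁻ x, ∫⁻ y, ∫⁻ z, Φ x y z ∂ρ ∂ν ∂μ = ∫⁻ z, ∫⁻ x, ∫⁻ y, Φ x y z ∂ν ∂μ ∂ρ := by
  have hΦ' : Measurable fun q : (α × γ) × β => Φ q.1.1 q.2 q.1.2 :=
    hΦ.comp (by fun_prop : Measurable fun q : (α × γ) × β => (q.1.1, q.2, q.1.2))
  calc ∫⁻ x, ∫⁻ y, ∫⁻ z, Φ x y z ∂ρ ∂ν ∂μ = ∫⁻ x, ∫⁻ z, ∫⁻ y, Φ x y z ∂ν ∂ρ ∂μ :=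
        lintegral_congr fun x =>
          lintegral_lintegral_swap (hΦ.comp measurable_prodMk_left).aemeasurable
    _ = ∫⁻ z, ∫⁻ x, ∫⁻ y, Φ x y z ∂ν ∂μ ∂ρ :=
        lintegral_lintegral_swap hΦ'.lintegral_prod_right'.aemeasurable

theorem measurable_ofReal_abs_sub_mul_indicator_uIoc :
    Measurable fun p : ℝ × ℝ × ℝ =>
      ENNReal.ofReal |p.1 - p.2.1| * (uIoc p.2.1 p.1).indicator 1 p.2.2 := by
  have hs : MeasurableSet {p : ℝ × ℝ × ℝ | p.2.2 ∈ uIoc p.2.1 p.1} :=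
    show MeasurableSet ({p : ℝ × ℝ × ℝ | min p.2.1 p.1 < p.2.2} ∩ {p | p.2.2 ≤ max p.2.1 p.1})
    from (measurableSet_lt (by fun_prop) (by fun_prop)).inter
      (measurableSet_le (by fun_prop) (by fun_prop))
  exact Measurable.mul (by fun_prop) (measurable_one.indicator hs)

theorem lintegral_lintegral_ofReal_abs_sub_mul_lintegral_indicator_uIoc {c d : ℝ}
    {g : ℝ → ℝ≥0∞} (hg : Measurable g) :
    ∫⁻ x in Ioo c d, ∫⁻ y in Ioo c d,
        ENNReal.ofReal |x - y| * ∫⁻ t in Ioo c d, (uIoc y x).indicator g t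
      = ∫⁻ t in Ioo c d, ENNReal.ofReal ((d - c) * ((t - c) * (d - t))) * g t := by
  have hκ := measurable_ofReal_abs_sub_mul_indicator_uIoc
  calc ∫⁻ x in Ioo c d, ∫⁻ y in Ioo c d,
        ENNReal.ofReal |x - y| * ∫⁻ t in Ioo c d, (uIoc y x).indicator g t
      = ∫⁻ x in Ioo c d, ∫⁻ y in Ioo c d, ∫⁻ t in Ioo c d,
          ENNReal.ofReal |x - y| * (uIoc y x).indicator 1 t * g t := by
        refine lintegral_congr fun x => lintegral_congr fun y => ?_
        rw [← lintegral_const_mul' _ _ ENNReal.ofReal_ne_top]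
        refine lintegral_congr fun t => ?_
        simp only [mul_assoc, indicator, Pi.one_apply]
        split_ifs <;> simp
    _ = ∫⁻ t in Ioo c d, ∫⁻ x in Ioo c d, ∫⁻ y in Ioo c d,
          ENNReal.ofReal |x - y| * (uIoc y x).indicator 1 t * g t :=
        lintegral_lintegral_lintegral_swap (hκ.mul (hg.comp (measurable_snd.comp measurable_snd)))
    _ = ∫⁻ t in Ioo c d, (∫⁻ x in Ioo c d, ∫⁻ y in Ioo c d,
          ENNReal.ofReal |x - y| * (uIoc y x).indicator 1 t) * g t := by
        refine lintegral_congr fun t => ?_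
        have hκt : Measurable fun q : ℝ × ℝ =>
            ENNReal.ofReal |q.1 - q.2| * (uIoc q.2 q.1).indicator 1 t :=
          hκ.comp (measurable_fst.prodMk (measurable_snd.prodMk measurable_const))
        rw [← lintegral_mul_const _ hκt.lintegral_prod_right']
        exact lintegral_congr fun x => lintegral_mul_const _ (hκt.comp measurable_prodMk_left)
    _ = ∫⁻ t in Ioo c d, ENNReal.ofReal ((d - c) * ((t - c) * (d - t))) * g t :=
        setLIntegral_congr_fun measurableSet_Ioo fun t ht => by
          rw [lintegral_lintegral_ofReal_abs_sub_mul_indicator_uIoc ht]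

section Poincare

-- Unlike an arbitrary `f'`, `deriv f` is measurable, which Tonelli's theorem needs.

variable {c d : ℝ} {f : ℝ → ℝ}

theorem ofReal_sq_sub_le_ofReal_abs_sub_mul_lintegral_deriv_sq
    (hf : DifferentiableOn ℝ f (Ioo c d))
    (hfin : IntegrableOn (fun t => (t - c) * (d - t) * deriv f t ^ 2) (Ioo c d))
    {x y : ℝ} (hx : x ∈ Ioo c d) (hy : y ∈ Ioo c d) :
    ENNReal.ofReal ((f x - f y) ^ 2) ≤ ENNReal.ofReal |x - y|
      * ∫⁻ t in Ioo c d, (uIoc y x).indicator (fun t => ENNReal.ofReal (deriv f t ^ 2)) t := by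
  wlog hyx : y ≤ x generalizing x y
  · rw [← neg_sub, neg_sq, abs_sub_comm, uIoc_comm]
    exact this hy hx (le_of_not_ge hyx)
  have hsub : Icc y x ⊆ Ioo c d := Icc_subset_Ioo hy.1 hx.2
  have hderiv (t : ℝ) (ht : t ∈ Icc y x) : HasDerivAt f (deriv f t) t :=
    (hf.differentiableAt (isOpen_Ioo.mem_nhds (hsub ht))).hasDerivAt
  have hmem : MemLp (deriv f) 2 (volume.restrict (Ioc y x)) :=
    memLp_two_Ioc_of_integrableOn_weight_mul_sq hy.1 hx.2
      (measurable_deriv f).aestronglyMeasurable hfin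
  rw [uIoc_of_le hyx, abs_of_nonneg (sub_nonneg.2 hyx), lintegral_indicator measurableSet_Ioc,
    Measure.restrict_restrict measurableSet_Ioc,
    inter_eq_left.2 (Ioc_subset_Icc_self.trans hsub),
    ← ofReal_integral_eq_lintegral_ofReal hmem.integrable_sq (ae_of_all _ fun t => sq_nonneg _),
    ← ENNReal.ofReal_mul (sub_nonneg.2 hyx)]
  exact ENNReal.ofReal_le_ofReal (sq_sub_le_mul_integral_sq_of_hasDerivAt hyx hderiv hmem)

theorem two_mul_sub_sq_le_mul_integral_weight_mul_deriv_sq (hcd : c ≤ d)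
    (hmem : MemLp f 2 (volume.restrict (Ioo c d))) (hf : DifferentiableOn ℝ f (Ioo c d))
    (hfin : IntegrableOn (fun t => (t - c) * (d - t) * deriv f t ^ 2) (Ioo c d)) :
    2 * ((d - c) * (∫ x in Ioo c d, f x ^ 2) - (∫ x in Ioo c d, f x) ^ 2)
      ≤ (d - c) * ∫ t in Ioo c d, (t - c) * (d - t) * deriv f t ^ 2 := by
  have hw (t : ℝ) (ht : t ∈ Ioo c d) : 0 ≤ (d - c) * ((t - c) * (d - t)) :=
    mul_nonneg (sub_nonneg.2 hcd) (mul_nonneg (sub_nonneg.2 ht.1.le) (sub_nonneg.2 ht.2.le))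
  have hwf (t : ℝ) (ht : t ∈ Ioo c d) : 0 ≤ (d - c) * ((t - c) * (d - t) * deriv f t ^ 2) := by
    rw [← mul_assoc]
    exact mul_nonneg (hw t ht) (sq_nonneg _)
  have hR : 0 ≤ (d - c) * ∫ t in Ioo c d, (t - c) * (d - t) * deriv f t ^ 2 := by
    rw [← MeasureTheory.integral_const_mul]
    exact setIntegral_nonneg measurableSet_Ioo hwf
  rw [← ENNReal.ofReal_le_ofReal_iff hR]
  calc ENNReal.ofReal (2 * ((d - c) * (∫ x in Ioo c d, f x ^ 2) - (∫ x in Ioo c d, f x) ^ 2))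
      = ∫⁻ x in Ioo c d, ∫⁻ y in Ioo c d, ENNReal.ofReal ((f x - f y) ^ 2) := by
        rw [lintegral_lintegral_ofReal_sub_sq hmem, measureReal_restrict_apply_univ,
          Real.volume_real_Ioo_of_le hcd]
    _ ≤ ∫⁻ x in Ioo c d, ∫⁻ y in Ioo c d, ENNReal.ofReal |x - y|
          * ∫⁻ t in Ioo c d, (uIoc y x).indicator (fun t => ENNReal.ofReal (deriv f t ^ 2)) t :=
        setLIntegral_mono' measurableSet_Ioo fun x hx => setLIntegral_mono' measurableSet_Ioo
          fun y hy => ofReal_sq_sub_le_ofReal_abs_sub_mul_lintegral_deriv_sq hf hfin hx hy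
    _ = ∫⁻ t in Ioo c d, ENNReal.ofReal ((d - c) * ((t - c) * (d - t)))
          * ENNReal.ofReal (deriv f t ^ 2) :=
        lintegral_lintegral_ofReal_abs_sub_mul_lintegral_indicator_uIoc
          (ENNReal.measurable_ofReal.comp ((measurable_deriv f).pow_const 2))
    _ = ENNReal.ofReal ((d - c) * ∫ t in Ioo c d, (t - c) * (d - t) * deriv f t ^ 2) := by
        rw [← MeasureTheory.integral_const_mul, ofReal_integral_eq_lintegral_ofReal
          (hfin.const_mul _) (ae_restrict_of_forall_mem measurableSet_Ioo hwf)]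
        refine setLIntegral_congr_fun measurableSet_Ioo fun t ht => ?_
        rw [← ENNReal.ofReal_mul (hw t ht), mul_assoc]

end Poincare

/-- Poincaré-type inequality on a general interval `[c,d]` with the degenerate
weight `(y−c)(d−y)` and the optimal constant `1/2`, which is independent of the length of
the interval. -/
theorem poincare_type_inequality (c d : ℝ) (hcd : c < d) (f f' : ℝ → ℝ)
    (hderiv : ∀ y ∈ Set.Icc c d, HasDerivAt f (f' y) y)
    (hfin : IntervalIntegrable (fun y => (y - c) * (d - y) * |f' y| ^ 2) volume c d) :
    (∫ y in c..d, |f y - (1 / (d - c)) * ∫ z in c..d, f z| ^ 2)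
      ≤ (1 / 2) * ∫ y in c..d, (y - c) * (d - y) * |f' y| ^ 2 := by
  have hcont : ContinuousOn f (Icc c d) := fun y hy =>
    (hderiv y hy).continuousAt.continuousWithinAt
  have hmem : MemLp f 2 (volume.restrict (Ioo c d)) :=
    (memLp_two_iff_integrable_sq ((hcont.aestronglyMeasurable measurableSet_Icc).mono_set
      Ioo_subset_Icc_self)).2 (((hcont.pow 2).integrableOn_Icc).mono_set Ioo_subset_Icc_self)
  have hweight : EqOn (fun y => (y - c) * (d - y) * |f' y| ^ 2)
      (fun y => (y - c) * (d - y) * deriv f y ^ 2) (Icc c d) := fun y hy => by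
    simp only [(hderiv y hy).deriv, sq_abs]
  have key := two_mul_sub_sq_le_mul_integral_weight_mul_deriv_sq hcd.le hmem
    (fun y hy => (hderiv y (Ioo_subset_Icc_self hy)).differentiableAt.differentiableWithinAt)
    ((hfin.1.mono_set Ioo_subset_Ioc_self).congr_fun (hweight.mono Ioo_subset_Icc_self)
      measurableSet_Ioo)
  have hvar := measureReal_mul_integral_sub_average_sq hmem
  rw [measureReal_restrict_apply_univ, Real.volume_real_Ioo_of_le hcd.le] at hvar
  rw [integral_congr (f := fun y => (y - c) * (d - y) * |f' y| ^ 2) (uIcc_of_le hcd.le ▸ hweight)]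
  simp only [integral_of_le hcd.le, integral_Ioc_eq_integral_Ioo, sq_abs]
  exact le_of_mul_le_mul_left (by linarith) (sub_pos.2 hcd)
end

section
/- Let γ > 1. For any v₊ > 0 and u₊ < 0, there exists a unique v₋ with 0 < v₋ < v₊ such that v₊^{1−γ}·(1 − (v₋/v₊)^{−γ})·(1 − v₋/v₊) = −u₊². -/
open Real Set Filter Topology

/-!
In the ratio `t = v₋ / v₊` the equation becomes `(t^(-γ) - 1)(1 - t) = u₊² / v₊^(1-γ)`.
On `(0, 1)` the left side is a product of two positive strictly decreasing factors, it tends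
to `+∞` as `t → 0⁺` and vanishes at `t = 1`, so by the intermediate value theorem it takes every
positive value exactly once.
-/

noncomputable def hugoniotFun (γ t : ℝ) : ℝ := (t ^ (-γ) - 1) * (1 - t)

section

variable {γ : ℝ}

lemma hugoniotFun_one : hugoniotFun γ 1 = 0 := by simp [hugoniotFun]

lemma continuousOn_hugoniotFun : ContinuousOn (hugoniotFun γ) (Ioi 0) :=
  ((continuousOn_id.rpow_const fun _ ht => Or.inl (ne_of_gt ht)).sub continuousOn_const).mul
    (continuousOn_const.sub continuousOn_id)

lemma strictAntiOn_hugoniotFun (hγ : 0 < γ) : StrictAntiOn (hugoniotFun γ) (Ioo 0 1) := by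
  intro s ⟨hs, _⟩ t ⟨_, ht⟩ hst
  have hpow : t ^ (-γ) < s ^ (-γ) := rpow_lt_rpow_of_neg hs hst (neg_neg_of_pos hγ)
  have hone : 1 < t ^ (-γ) :=
    one_lt_rpow_of_pos_of_lt_one_of_neg (hs.trans hst) ht (neg_neg_of_pos hγ)
  exact mul_lt_mul'' (by linarith) (by linarith) (by linarith) (by linarith)

lemma tendsto_hugoniotFun_nhdsGT_zero (hγ : 0 < γ) :
    Tendsto (hugoniotFun γ) (𝓝[>] 0) atTop := by
  have hpow : Tendsto (fun t : ℝ => t ^ (-γ) - 1) (𝓝[>] 0) atTop :=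
    tendsto_atTop_add_const_right _ (-1) (tendsto_rpow_neg_nhdsGT_zero (neg_neg_of_pos hγ))
  have hlin : Tendsto (fun t : ℝ => 1 - t) (𝓝[>] 0) (𝓝 1) := by
    simpa using ((continuous_sub_left (1 : ℝ)).tendsto 0).mono_left nhdsWithin_le_nhds
  exact hpow.atTop_mul_pos one_pos hlin

lemma surjOn_hugoniotFun (hγ : 0 < γ) : SurjOn (hugoniotFun γ) (Ioo 0 1) (Ioi 0) := by
  have := left_nhdsWithin_Ioo_neBot (zero_lt_one' ℝ)
  have := right_nhdsWithin_Ioo_neBot (zero_lt_one' ℝ)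
  have hcont := continuousOn_hugoniotFun (γ := γ)
  refine isPreconnected_Ioo.intermediate_value_Ioi (l₁ := 𝓝[Ioo 0 1] 1) (l₂ := 𝓝[Ioo 0 1] 0)
    inf_le_right inf_le_right (hcont.mono Ioo_subset_Ioi_self) ?_
    ((tendsto_hugoniotFun_nhdsGT_zero hγ).mono_left (nhdsWithin_mono _ Ioo_subset_Ioi_self))
  rw [← hugoniotFun_one (γ := γ)]
  exact (hcont.continuousAt (Ioi_mem_nhds one_pos)).continuousWithinAt

lemma existsUnique_hugoniotFun_eq (hγ : 0 < γ) {c : ℝ} (hc : 0 < c) :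
    ∃! t, t ∈ Ioo 0 1 ∧ hugoniotFun γ t = c := by
  obtain ⟨t, ht, hct⟩ := surjOn_hugoniotFun hγ hc
  exact ⟨t, ⟨ht, hct⟩, fun s ⟨hs, hcs⟩ =>
    (strictAntiOn_hugoniotFun hγ).injOn hs ht (hcs.trans hct.symm)⟩

end

/-- Let `γ > 1`.  For any `v₊ > 0` and `u₊ < 0`, there exists a unique `v₋`
with `0 < v₋ < v₊` such that
`v₊^{1−γ}·(1 − (v₋/v₊)^{−γ})·(1 − v₋/v₊) = −u₊²`
(determination of the left state for the impermeable wall problem). -/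
theorem impermeable_left_state_exists_unique
    (γ : ℝ) (hγ : 1 < γ) (vp up : ℝ) (hvp : 0 < vp) (hup : up < 0) :
    ∃! vm : ℝ, 0 < vm ∧ vm < vp ∧
      vp ^ (1 - γ) * (1 - (vm / vp) ^ (-γ)) * (1 - vm / vp) = -up ^ 2 := by
  have hscale : 0 < vp ^ (1 - γ) := rpow_pos_of_pos hvp _
  have hiff : ∀ vm, (0 < vm ∧ vm < vp ∧
      vp ^ (1 - γ) * (1 - (vm / vp) ^ (-γ)) * (1 - vm / vp) = -up ^ 2) ↔
      vm / vp ∈ Ioo 0 1 ∧ hugoniotFun γ (vm / vp) = up ^ 2 / vp ^ (1 - γ) := fun vm => by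
    rw [← and_assoc, mem_Ioo, div_pos_iff_of_pos_right hvp, div_lt_one hvp, hugoniotFun,
      eq_div_iff hscale.ne']
    exact and_congr_right fun _ => by constructor <;> intro h <;> linarith
  obtain ⟨t, ht, huniq⟩ :=
    existsUnique_hugoniotFun_eq (γ := γ) (by linarith) (div_pos (sq_pos_of_neg hup) hscale)
  refine ⟨vp * t, (hiff _).2 ?_, fun vm hvm => ?_⟩
  · rwa [mul_div_cancel_left₀ _ hvp.ne']
  · rw [← huniq _ ((hiff vm).1 hvm), mul_div_cancel₀ _ hvp.ne']
end
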